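/- arXiv:1911.04790 — 4 statements merged into one kernel-verified Lean document; each statement's English description precedes it below -/
import Mathlib

section
/- Classification of differential exponential maps on ℝ: if e : ℝ → ℝ is differentiable, deriv e 0 = 1, and e (x + y) = deriv e x * e y for all x, y, then e 0 ≠ 0 and e x = e 0 * Real.exp (x / e 0) for all x. -/
/-!
Setting `y = 0` in `e (x + y) = e' x * e y` gives `e = c • e'` with `c = e 0`. If `c = 0` then
`e ≡ 0`, contradicting `e' 0 = 1`; otherwise `e' = e / c`, and the only solutions of this linear
ODE are `x ↦ e 0 * exp (x / c)`.
-/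

open Real

theorem eq_exp_smul_of_hasDerivAt_smul_self {E : Type*} [NormedAddCommGroup E] [NormedSpace ℝ E]
    {f : ℝ → E} {a : ℝ} (hf : ∀ x, HasDerivAt f (a • f x) x) (x : ℝ) :
    f x = exp (a * x) • f 0 := by
  have hg : ∀ y, HasDerivAt (fun t ↦ exp (-(a * t)) • f t) 0 y := fun y ↦ by
    have hexp : HasDerivAt (fun t ↦ exp (-(a * t))) (exp (-(a * y)) * -a) y := by
      simpa using ((hasDerivAt_id y).const_mul a).neg.exp
    refine (hexp.smul (hf y)).congr_deriv ?_
    rw [smul_smul, mul_neg, neg_smul, add_neg_cancel]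
  have hconst := is_const_of_deriv_eq_zero (fun y ↦ (hg y).differentiableAt)
    (fun y ↦ (hg y).deriv) x 0
  simp only [mul_zero, neg_zero, exp_zero, one_smul] at hconst
  rw [← hconst, smul_smul, ← exp_add, add_neg_cancel, exp_zero, one_smul]

theorem apply_zero_ne_zero_of_eq_deriv_mul {e : ℝ → ℝ} (h0 : deriv e 0 = 1)
    (he : ∀ x, e x = deriv e x * e 0) : e 0 ≠ 0 := by
  intro hc
  have : e = 0 := funext fun x ↦ by rw [he x, hc, mul_zero, Pi.zero_apply]
  simp [this] at h0

theorem classification_of_differential_exponential_maps_on_real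
    (e : ℝ → ℝ) (hd : Differentiable ℝ e)
    (h0 : deriv e 0 = 1)
    (hmul : ∀ x y : ℝ, e (x + y) = deriv e x * e y) :
    e 0 ≠ 0 ∧ ∀ x : ℝ, e x = e 0 * Real.exp (x / e 0) := by
  have he : ∀ x, e x = deriv e x * e 0 := fun x ↦ by simpa using hmul x 0
  have hc := apply_zero_ne_zero_of_eq_deriv_mul h0 he
  have hode : ∀ x, HasDerivAt e ((e 0)⁻¹ • e x) x := fun x ↦ by
    refine (hd x).hasDerivAt.congr_deriv ?_
    rw [smul_eq_mul, he x, mul_comm, mul_assoc, mul_inv_cancel₀ hc, mul_one]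
  refine ⟨hc, fun x ↦ ?_⟩
  rw [eq_exp_smul_of_hasDerivAt_smul_self hode x, smul_eq_mul, mul_comm, inv_mul_eq_div]
end

section
/- The split-complex (hyperbolic) exponential F : ℝ × ℝ → ℝ × ℝ defined by F (x, y) = (exp x * cosh y, exp x * sinh y) is a differential exponential map: fderiv ℝ F (0, 0) is the identity map of ℝ × ℝ, and for all a b : ℝ × ℝ, fderiv ℝ F a (F b) = F (a + b). -/
/-!
Identify `ℝ × ℝ` with the split-complex numbers `x + y j`, `j² = 1`. Then
`F (x, y) = exp x (cosh y + j sinh y)` is the split-complex exponential, whose derivative at `a`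
is multiplication by `F a`. Hence `D F(0)` is multiplication by `F 0 = 1`, and
`D F(a) (F b) = F a · F b = F (a + b)` by the addition formulas for `exp`, `cosh` and `sinh`.
-/

open Real ContinuousLinearMap

namespace SplitComplex

noncomputable def mulLeft (u : ℝ × ℝ) : (ℝ × ℝ) →L[ℝ] (ℝ × ℝ) :=
  (u.1 • fst ℝ ℝ ℝ + u.2 • snd ℝ ℝ ℝ).prod (u.2 • fst ℝ ℝ ℝ + u.1 • snd ℝ ℝ ℝ)

@[simp]
lemma mulLeft_apply (u v : ℝ × ℝ) :
    mulLeft u v = (u.1 * v.1 + u.2 * v.2, u.2 * v.1 + u.1 * v.2) := rfl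

lemma mulLeft_one : mulLeft (1, 0) = ContinuousLinearMap.id ℝ (ℝ × ℝ) := by
  ext <;> simp

noncomputable def exp (p : ℝ × ℝ) : ℝ × ℝ :=
  (Real.exp p.1 * cosh p.2, Real.exp p.1 * sinh p.2)

lemma exp_zero : exp 0 = (1, 0) := by
  simp [exp]

lemma mulLeft_exp_apply_exp (a b : ℝ × ℝ) : mulLeft (exp a) (exp b) = exp (a + b) := by
  simp only [mulLeft_apply, exp, Prod.fst_add, Prod.snd_add, Real.exp_add, cosh_add, sinh_add]
  ext <;> ring

lemma hasFDerivAt_exp (a : ℝ × ℝ) : HasFDerivAt exp (mulLeft (exp a)) a := by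
  have hexp := (hasDerivAt_exp a.1).hasFDerivAt.comp a hasFDerivAt_fst
  have hcosh := (hasDerivAt_cosh a.2).hasFDerivAt.comp a hasFDerivAt_snd
  have hsinh := (hasDerivAt_sinh a.2).hasFDerivAt.comp a hasFDerivAt_snd
  refine ((hexp.mul hcosh).prodMk (hexp.mul hsinh)).congr_fderiv ?_
  ext <;> simp [exp] <;> ring

end SplitComplex

theorem split_complex_exp_is_differential_exponential_map :
    (fderiv ℝ (fun p : ℝ × ℝ => (Real.exp p.1 * Real.cosh p.2, Real.exp p.1 * Real.sinh p.2))
        ((0, 0) : ℝ × ℝ) = ContinuousLinearMap.id ℝ (ℝ × ℝ)) ∧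
    (∀ a b : ℝ × ℝ,
      fderiv ℝ (fun p : ℝ × ℝ => (Real.exp p.1 * Real.cosh p.2, Real.exp p.1 * Real.sinh p.2)) a
        (Real.exp b.1 * Real.cosh b.2, Real.exp b.1 * Real.sinh b.2) =
      (Real.exp (a + b).1 * Real.cosh (a + b).2, Real.exp (a + b).1 * Real.sinh (a + b).2)) := by
  have hD (a : ℝ × ℝ) : fderiv ℝ SplitComplex.exp a = SplitComplex.mulLeft (SplitComplex.exp a) :=
    (SplitComplex.hasFDerivAt_exp a).fderiv
  refine ⟨?_, fun a b => ?_⟩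
  · show fderiv ℝ SplitComplex.exp 0 = _
    rw [hD, SplitComplex.exp_zero, SplitComplex.mulLeft_one]
  · show fderiv ℝ SplitComplex.exp a (SplitComplex.exp b) = SplitComplex.exp (a + b)
    rw [hD, SplitComplex.mulLeft_exp_apply_exp]
end

section
/- The dual-numbers exponential F : ℝ × ℝ → ℝ × ℝ defined by F (x, y) = (exp x, exp x * y) is a differential exponential map: fderiv ℝ F (0, 0) is the identity map of ℝ × ℝ, and for all a b : ℝ × ℝ, fderiv ℝ F a (F b) = F (a + b). -/
open Real

/-- The pair `(x, y)` stands for the dual number `x + y ε`, with exponential `eˣ + eˣ y ε`. -/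
noncomputable def dualExp (p : ℝ × ℝ) : ℝ × ℝ := (exp p.1, exp p.1 * p.2)

lemma hasFDerivAt_dualExp (a : ℝ × ℝ) :
    HasFDerivAt dualExp
      ((exp a.1 • ContinuousLinearMap.fst ℝ ℝ ℝ).prod
        (exp a.1 • ContinuousLinearMap.snd ℝ ℝ ℝ +
          a.2 • exp a.1 • ContinuousLinearMap.fst ℝ ℝ ℝ))
      a :=
  have hexp := (hasFDerivAt_fst (p := a)).exp
  hexp.prodMk (hexp.mul hasFDerivAt_snd)

lemma fderiv_dualExp_apply (a v : ℝ × ℝ) :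
    fderiv ℝ dualExp a v = (exp a.1 * v.1, exp a.1 * (a.2 * v.1 + v.2)) := by
  rw [(hasFDerivAt_dualExp a).fderiv]
  simp only [ContinuousLinearMap.prod_apply, add_apply, smul_apply, ContinuousLinearMap.coe_fst',
    ContinuousLinearMap.coe_snd', smul_eq_mul, Prod.mk.injEq, true_and]
  ring

lemma fderiv_dualExp_zero : fderiv ℝ dualExp 0 = ContinuousLinearMap.id ℝ (ℝ × ℝ) := by
  ext <;> simp [fderiv_dualExp_apply]

/-- The differential of `dualExp` at `a` is multiplication by the dual number `dualExp a`, and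
`dualExp` turns sums into products. -/
lemma fderiv_dualExp_apply_dualExp (a b : ℝ × ℝ) :
    fderiv ℝ dualExp a (dualExp b) = dualExp (a + b) := by
  simp only [fderiv_dualExp_apply, dualExp, Prod.fst_add, Prod.snd_add, exp_add, Prod.mk.injEq,
    true_and]
  ring

theorem dual_numbers_exp_is_differential_exponential_map :
    (fderiv ℝ (fun p : ℝ × ℝ => (Real.exp p.1, Real.exp p.1 * p.2))
        ((0, 0) : ℝ × ℝ) = ContinuousLinearMap.id ℝ (ℝ × ℝ)) ∧
    (∀ a b : ℝ × ℝ,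
      fderiv ℝ (fun p : ℝ × ℝ => (Real.exp p.1, Real.exp p.1 * p.2)) a
        (Real.exp b.1, Real.exp b.1 * b.2) =
      (Real.exp (a + b).1, Real.exp (a + b).1 * (a + b).2)) :=
  ⟨fderiv_dualExp_zero, fderiv_dualExp_apply_dualExp⟩
end

section
/- If e₁ : ℝ → ℝ and e₂ : ℝ → ℝ are differentiable differential exponential maps, then the product map F : ℝ × ℝ → ℝ × ℝ defined by F (x, y) = (e₁ x, e₂ y) is a differential exponential map: fderiv ℝ F (0,0) is the identity, and fderiv ℝ F a (F b) = F (a + b) for all a b : ℝ × ℝ. -/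
theorem fderiv_prodMap_apply {𝕜 : Type*} [NontriviallyNormedField 𝕜] {f g : 𝕜 → 𝕜}
    {a : 𝕜 × 𝕜} (hf : DifferentiableAt 𝕜 f a.1) (hg : DifferentiableAt 𝕜 g a.2) (v : 𝕜 × 𝕜) :
    fderiv 𝕜 (fun p : 𝕜 × 𝕜 => (f p.1, g p.2)) a v = (deriv f a.1 * v.1, deriv g a.2 * v.2) := by
  have h : HasFDerivAt (fun p : 𝕜 × 𝕜 => (f p.1, g p.2)) _ a :=
    hf.hasDerivAt.hasFDerivAt.prodMap a hg.hasDerivAt.hasFDerivAt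
  rw [h.fderiv]
  exact Prod.ext (mul_comm _ _) (mul_comm _ _)

theorem product_of_differential_exponential_maps
    (e₁ e₂ : ℝ → ℝ)
    (hd₁ : Differentiable ℝ e₁) (hd₂ : Differentiable ℝ e₂)
    (h0₁ : deriv e₁ 0 = 1) (h0₂ : deriv e₂ 0 = 1)
    (hm₁ : ∀ x y : ℝ, e₁ (x + y) = deriv e₁ x * e₁ y)
    (hm₂ : ∀ x y : ℝ, e₂ (x + y) = deriv e₂ x * e₂ y) :
    (fderiv ℝ (fun p : ℝ × ℝ => (e₁ p.1, e₂ p.2)) ((0, 0) : ℝ × ℝ)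
      = ContinuousLinearMap.id ℝ (ℝ × ℝ)) ∧
    (∀ a b : ℝ × ℝ,
      fderiv ℝ (fun p : ℝ × ℝ => (e₁ p.1, e₂ p.2)) a (e₁ b.1, e₂ b.2)
        = (e₁ (a + b).1, e₂ (a + b).2)) := by
  refine ⟨ContinuousLinearMap.ext fun v => ?_, fun a b => ?_⟩
  · rw [fderiv_prodMap_apply (hd₁ 0) (hd₂ 0), h0₁, h0₂, one_mul, one_mul]
    rfl
  · rw [fderiv_prodMap_apply (hd₁ a.1) (hd₂ a.2), Prod.fst_add, Prod.snd_add, hm₁, hm₂]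
end
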